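/- Combined KKL+PEB error convergence: assume φ : ℝⁿ → ℝ^{n_ξ} satisfies ∇φ(x)ᵀ f(x,v) = Λ φ(x) + B(h(x),v) with block-diagonal Λ = diag(Λ_L, 0), where Λ_L = diag(λ₁,…,λ_q) with λᵢ < 0. Partition φ = (φ_L, φ_P) and B = (B_L, B_P) accordingly. If x solves ẋ = f(x,u(t)), ξ_L solves ξ̇_L = Λ_L ξ_L + B_L(h(x),u) and ξ_P solves ξ̇_P = B_P(h(x),u), then ξ_L(t) − φ_L(x(t)) → 0 as t → ∞ and ξ_P(t) − φ_P(x(t)) is constant in t. -/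

import Mathlib

/-!
Along a trajectory, the PDE for `φ` says that `φ_L ∘ x` solves the same differential equation
as `ξ_L` up to the common input `B_L(h(x), u)`, so the error `e = ξ_L - φ_L ∘ x` solves
`ė = Λ_L e`. Since `Λ_L` is diagonal, each coordinate is `e_i(0) exp(λ_i t)`, which decays
because `λ_i < 0`. In the PEB block `Λ` vanishes, so the error has zero derivative and is constant.
-/

open Filter Topology Matrix

theorem eq_of_hasDerivAt_zero_of_nonneg {E : Type*} [NormedAddCommGroup E] [NormedSpace ℝ E]
    {g : ℝ → E} (hg : ∀ t, 0 ≤ t → HasDerivAt g 0 t) {s t : ℝ} (hs : 0 ≤ s) (ht : 0 ≤ t) :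
    g s = g t := by
  have hconst : ∀ t, 0 ≤ t → g t = g 0 := fun t ht =>
    constant_of_has_deriv_right_zero
      (fun s hs => (hg s hs.1).continuousAt.continuousWithinAt)
      (fun s hs => (hg s hs.1).hasDerivWithinAt) t ⟨ht, le_rfl⟩
  rw [hconst s hs, hconst t ht]

theorem eq_mul_exp_of_hasDerivAt_mul_self {c : ℝ} {g : ℝ → ℝ}
    (hg : ∀ t, 0 ≤ t → HasDerivAt g (c * g t) t) {t : ℝ} (ht : 0 ≤ t) :
    g t = g 0 * Real.exp (c * t) := by
  have hdamped : ∀ s, 0 ≤ s →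
      HasDerivAt (fun s => Real.exp (-c * s) * g s) 0 s := by
    intro s hs
    have hexp : HasDerivAt (fun s => Real.exp (-c * s)) (Real.exp (-c * s) * -c) s := by
      simpa using ((hasDerivAt_id s).const_mul (-c)).exp
    exact (hexp.mul (hg s hs)).congr_deriv (by ring)
  have key := eq_of_hasDerivAt_zero_of_nonneg hdamped ht le_rfl
  simp only [mul_zero, Real.exp_zero, one_mul] at key
  rw [← key, mul_right_comm, ← Real.exp_add]
  simp

theorem tendsto_zero_of_hasDerivAt_mul_self {c : ℝ} (hc : c < 0) {g : ℝ → ℝ}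
    (hg : ∀ t, 0 ≤ t → HasDerivAt g (c * g t) t) : Tendsto g atTop (𝓝 0) := by
  have hexp : Tendsto (fun t => Real.exp (c * t)) atTop (𝓝 0) :=
    Real.tendsto_exp_atBot.comp (tendsto_id.const_mul_atTop_of_neg hc)
  have hsol : Tendsto (fun t => g 0 * Real.exp (c * t)) atTop (𝓝 0) := by
    simpa using hexp.const_mul (g 0)
  refine hsol.congr' ?_
  filter_upwards [eventually_ge_atTop 0] with t ht
  exact (eq_mul_exp_of_hasDerivAt_mul_self hg ht).symm

theorem tendsto_zero_of_hasDerivAt_diagonal_mulVec {ι : Type*} [Fintype ι] [DecidableEq ι]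
    {d : ι → ℝ} (hd : ∀ i, d i < 0) {e : ℝ → ι → ℝ}
    (he : ∀ t, 0 ≤ t → HasDerivAt e (diagonal d *ᵥ e t) t) :
    Tendsto e atTop (𝓝 0) := by
  refine tendsto_pi_nhds.2 fun i => tendsto_zero_of_hasDerivAt_mul_self (hd i) fun t ht => ?_
  simpa [mulVec_diagonal] using hasDerivAt_pi.1 (he t ht) i

/-- Core of Proposition 3 ([KKL+PEB] observer): the KKL part of the error
converges to zero and the PEB part of the error is constant. -/
theorem stmt_3 {n m p q r : ℕ}
    (f : (Fin n → ℝ) → (Fin m → ℝ) → (Fin n → ℝ))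
    (h : (Fin n → ℝ) → (Fin p → ℝ))
    (BL : (Fin p → ℝ) → (Fin m → ℝ) → (Fin q → ℝ))
    (BP : (Fin p → ℝ) → (Fin m → ℝ) → (Fin r → ℝ))
    (ΛL : Matrix (Fin q) (Fin q) ℝ) (d : Fin q → ℝ)
    (hΛ : ΛL = Matrix.diagonal d) (hd : ∀ i, d i < 0)
    (φL : (Fin n → ℝ) → (Fin q → ℝ)) (hφL : Differentiable ℝ φL)
    (φP : (Fin n → ℝ) → (Fin r → ℝ)) (hφP : Differentiable ℝ φP)
    (hPDEL : ∀ (z : Fin n → ℝ) (v : Fin m → ℝ),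
      fderiv ℝ φL z (f z v) = ΛL.mulVec (φL z) + BL (h z) v)
    (hPDEP : ∀ (z : Fin n → ℝ) (v : Fin m → ℝ),
      fderiv ℝ φP z (f z v) = BP (h z) v)
    (u : ℝ → (Fin m → ℝ))
    (x : ℝ → (Fin n → ℝ)) (ξL : ℝ → (Fin q → ℝ)) (ξP : ℝ → (Fin r → ℝ))
    (hx : ∀ t : ℝ, 0 ≤ t → HasDerivAt x (f (x t) (u t)) t)
    (hξL : ∀ t : ℝ, 0 ≤ t → HasDerivAt ξL (ΛL.mulVec (ξL t) + BL (h (x t)) (u t)) t)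
    (hξP : ∀ t : ℝ, 0 ≤ t → HasDerivAt ξP (BP (h (x t)) (u t)) t) :
    Filter.Tendsto (fun t => ξL t - φL (x t)) Filter.atTop (nhds 0) ∧
    (∀ s t : ℝ, 0 ≤ s → 0 ≤ t →
      ξP s - φP (x s) = ξP t - φP (x t)) := by
  have hφLx : ∀ t, 0 ≤ t →
      HasDerivAt (fun t => φL (x t)) (ΛL *ᵥ φL (x t) + BL (h (x t)) (u t)) t := fun t ht =>
    hPDEL (x t) (u t) ▸ (hφL (x t)).hasFDerivAt.comp_hasDerivAt t (hx t ht)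
  have hφPx : ∀ t, 0 ≤ t → HasDerivAt (fun t => φP (x t)) (BP (h (x t)) (u t)) t :=
    fun t ht => hPDEP (x t) (u t) ▸ (hφP (x t)).hasFDerivAt.comp_hasDerivAt t (hx t ht)
  refine ⟨tendsto_zero_of_hasDerivAt_diagonal_mulVec hd fun t ht => ?_,
    fun s t hs ht =>
    eq_of_hasDerivAt_zero_of_nonneg (g := fun t => ξP t - φP (x t)) (fun t ht => ?_) hs ht⟩
  · refine ((hξL t ht).sub (hφLx t ht)).congr_deriv ?_
    rw [← hΛ, mulVec_sub]
    abel
  · exact ((hξP t ht).sub (hφPx t ht)).congr_deriv (sub_self _)
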